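/- Let Ω ⊆ ℝⁿ be open, H : Ω × ℝⁿ → ℝ continuous and coercive in the second variable uniformly on compact sets (for every compact K ⊆ Ω and every C there is R such that H(x,p) > C whenever x ∈ K and |p| ≥ R). If u : Ω → ℝ is a viscosity subsolution of H(x, Du) = 0 on Ω, then u is locally Lipschitz continuous: for every compact K ⊆ Ω there is a constant C_K with |u(x) − u(y)| ≤ C_K |x − y| for all x, y ∈ K with the segment [x,y] ⊆ Ω. -/

import Mathlib

/-!
Let `M` bound `u` and let `H > 0` for `‖p‖ ≥ R` on a compact `δ`-neighbourhood of `K` in `Ω`.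
If `C ≥ R`, then `u - C‖· - x₀‖` cannot have a local maximum at a point `y ≠ x₀` inside `Ω`:
the smooth paraboloid `C ‖· - x₀‖² / (2‖y - x₀‖)` touches the cone from above at `y` with
gradient of norm `C`, so the subsolution test would force `H(y, p) ≤ 0` with `‖p‖ = C`. Hence on
a ball around `x₀ ∈ K` the maximum of `u - C‖· - x₀‖` sits at the centre or on the boundary
sphere, and once `C · δ/2 ≥ M - u(x₀)` the boundary is excluded, giving
`u(y) ≤ u(x₀) + C‖y - x₀‖`. Applied with a centre-dependent `C` this bounds `u` from below near
every point, hence on `K` by compactness, after which a single `C` works for all centres.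
-/

open Set Metric

theorem IsCompact.bddBelow_image_of_forall_nhdsWithin {α : Type*} [TopologicalSpace α]
    {K : Set α} {f : α → ℝ} (hK : IsCompact K)
    (hloc : ∀ x ∈ K, ∃ t ∈ nhdsWithin x K, BddBelow (f '' t)) : BddBelow (f '' K) :=
  hK.induction_on (p := fun s => BddBelow (f '' s)) (by simp)
    (fun _ _ hst ht => ht.mono (image_mono hst))
    (fun s t hs ht => by rw [image_union]; exact hs.union ht) hloc

section ConeBound

variable {α : Type*} [PseudoMetricSpace α] {K : Set α} {f : α → ℝ} {m M R C ρ : ℝ}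

theorem bddBelow_image_of_cone_bound (hK : IsCompact K) (hρ : 0 < ρ) (hR : 0 ≤ R)
    (hM : ∀ x ∈ K, f x ≤ M)
    (hcone : ∀ x ∈ K, ∀ C, R ≤ C → M - f x ≤ C * ρ →
      ∀ y ∈ K, dist y x ≤ ρ → f y ≤ f x + C * dist y x) :
    BddBelow (f '' K) := by
  refine hK.bddBelow_image_of_forall_nhdsWithin fun x hx =>
    ⟨K ∩ ball x (ρ / 2), inter_mem_nhdsWithin K (ball_mem_nhds x (half_pos hρ)),
      2 * f x - R * ρ - M, ?_⟩
  rintro _ ⟨y, ⟨hy, hyx⟩, rfl⟩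
  have hxy : dist x y ≤ ρ / 2 := by rw [dist_comm]; exact (mem_ball.1 hyx).le
  have hMy : 0 ≤ (M - f y) / ρ := div_nonneg (by linarith [hM y hy]) hρ.le
  have hCy : M - f y ≤ (R + (M - f y) / ρ) * ρ := by
    rw [add_mul, div_mul_cancel₀ _ hρ.ne']; nlinarith
  have hcone_y := hcone y hy _ (le_add_of_nonneg_right hMy) hCy x hx (by linarith)
  have hslope : (R + (M - f y) / ρ) * dist x y ≤ R * ρ / 2 + (M - f y) / 2 := calc
    _ ≤ (R + (M - f y) / ρ) * (ρ / 2) := mul_le_mul_of_nonneg_left hxy (add_nonneg hR hMy)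
    _ = R * ρ / 2 + (M - f y) / 2 := by field_simp
  linarith

theorem abs_sub_le_mul_dist_of_cone_bound (hρ : 0 < ρ) (hm : ∀ x ∈ K, m ≤ f x)
    (hM : ∀ x ∈ K, f x ≤ M) (hC : M - m ≤ C * ρ)
    (hcone : ∀ x ∈ K, ∀ y ∈ K, dist y x ≤ ρ → f y ≤ f x + C * dist y x)
    {x y : α} (hx : x ∈ K) (hy : y ∈ K) : |f x - f y| ≤ C * dist x y := by
  rcases le_or_gt (dist x y) ρ with hxy | hxy
  · have h₁ := hcone x hx y hy (by rwa [dist_comm])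
    have h₂ := hcone y hy x hx hxy
    rw [dist_comm y x] at h₁
    exact abs_sub_le_iff.2 ⟨by linarith, by linarith⟩
  · have hC₀ : 0 ≤ C := nonneg_of_mul_nonneg_left (by linarith [hm x hx, hM x hx]) hρ
    have hfar : C * ρ ≤ C * dist x y := mul_le_mul_of_nonneg_left hxy.le hC₀
    exact abs_sub_le_iff.2 ⟨by linarith [hM x hx, hm y hy], by linarith [hM y hy, hm x hx]⟩

theorem exists_abs_sub_le_mul_dist_of_cone_bound (hK : IsCompact K) (hρ : 0 < ρ) (hR : 0 ≤ R)
    (hM : ∀ x ∈ K, f x ≤ M)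
    (hcone : ∀ x ∈ K, ∀ C, R ≤ C → M - f x ≤ C * ρ →
      ∀ y ∈ K, dist y x ≤ ρ → f y ≤ f x + C * dist y x) :
    ∃ L, ∀ x ∈ K, ∀ y ∈ K, |f x - f y| ≤ L * dist x y := by
  obtain ⟨m, hm⟩ := bddBelow_image_of_cone_bound hK hρ hR hM hcone
  replace hm : ∀ x ∈ K, m ≤ f x := fun x hx => hm (mem_image_of_mem f hx)
  have hL : M - m ≤ (R + (M - m) / ρ) * ρ := by
    rw [add_mul, div_mul_cancel₀ _ hρ.ne']; nlinarith
  refine ⟨R + (M - m) / ρ, fun x hx y hy =>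
    abs_sub_le_mul_dist_of_cone_bound hρ hm hM hL (fun x hx => hcone x hx _ ?_ ?_) hx hy⟩
  · exact le_add_of_nonneg_right (div_nonneg (by linarith [hm x hx, hM x hx]) hρ.le)
  · linarith [hm x hx]

end ConeBound

section Viscosity

variable {E : Type*} [NormedAddCommGroup E] [InnerProductSpace ℝ E] [CompleteSpace E]
  {H : E → E → ℝ} {u : E → ℝ} {Ω : Set E}

structure IsViscositySubsolution (H : E → E → ℝ) (u : E → ℝ) (Ω : Set E) : Prop where
  upperSemicontinuousOn : UpperSemicontinuousOn u Ω
  le_zero_of_isLocalMaxOn : ∀ x ∈ Ω, ∀ φ : E → ℝ, ContDiff ℝ 1 φ →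
    IsLocalMaxOn (fun y => u y - φ y) Ω x → H x (gradient φ x) ≤ 0

theorem hasGradientAt_const_mul_norm_sub_sq (x₀ y : E) (c : ℝ) :
    HasGradientAt (fun z => c * ‖z - x₀‖ ^ 2) ((2 * c) • (y - x₀)) y := by
  have h : HasFDerivAt (fun z => c * ‖z - x₀‖ ^ 2) _ y :=
    ((hasFDerivAt_id y).sub_const x₀).norm_sq.const_mul c
  rw [hasGradientAt_iff_hasFDerivAt]
  refine h.congr_fderiv ?_
  ext v
  simp
  ring

theorem IsViscositySubsolution.exists_norm_eq_of_isLocalMaxOn_sub_cone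
    (hu : IsViscositySubsolution H u Ω) {x₀ y : E} {C : ℝ} (hy : y ∈ Ω) (hyx₀ : y ≠ x₀)
    (hC : 0 ≤ C) (hmax : IsLocalMaxOn (fun z => u z - C * dist z x₀) Ω y) :
    ∃ p, ‖p‖ = C ∧ H y p ≤ 0 := by
  set ρ := dist y x₀
  have hρ : 0 < ρ := dist_pos.2 hyx₀
  set φ : E → ℝ := fun z => C / (2 * ρ) * ‖z - x₀‖ ^ 2
  have hφ : HasGradientAt φ ((C / ρ) • (y - x₀)) y := by
    convert hasGradientAt_const_mul_norm_sub_sq x₀ y (C / (2 * ρ)) using 2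
    field_simp
  have htouch : ∀ z, C * dist z x₀ - φ z ≤ C * ρ - φ y := fun z => by
    have hsq : 0 ≤ C / (2 * ρ) * (dist z x₀ - ρ) ^ 2 := by positivity
    have hid : C * dist z x₀ - φ z = C * ρ - φ y - C / (2 * ρ) * (dist z x₀ - ρ) ^ 2 := by
      simp only [φ, ← dist_eq_norm]; field_simp; ring
    linarith
  refine ⟨(C / ρ) • (y - x₀), ?_, hφ.gradient ▸ hu.le_zero_of_isLocalMaxOn y hy φ ?_ ?_⟩
  · rw [norm_smul, ← dist_eq_norm, Real.norm_of_nonneg (by positivity), div_mul_cancel₀ _ hρ.ne']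
  · exact contDiff_const.mul ((contDiff_id.sub contDiff_const).norm_sq ℝ)
  · filter_upwards [hmax] with z hz
    linarith [htouch z]

theorem IsViscositySubsolution.le_add_mul_dist [ProperSpace E]
    (hu : IsViscositySubsolution H u Ω) {x₀ : E} {r R C M : ℝ} (hball : closedBall x₀ r ⊆ Ω)
    (hH : ∀ z ∈ closedBall x₀ r, ∀ p, R ≤ ‖p‖ → 0 < H z p)
    (hM : ∀ z ∈ closedBall x₀ r, u z ≤ M) (hRC : R ≤ C) (hC : 0 ≤ C) (hMC : M - u x₀ ≤ C * r) :
    ∀ y ∈ closedBall x₀ r, u y ≤ u x₀ + C * dist y x₀ := by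
  intro y hy
  have hx₀ : x₀ ∈ closedBall x₀ r := mem_closedBall_self (nonempty_closedBall.1 ⟨y, hy⟩)
  have hcont : Continuous fun z => -(C * dist z x₀) := by fun_prop
  have husc : UpperSemicontinuousOn (fun z => u z - C * dist z x₀) (closedBall x₀ r) :=
    (hu.upperSemicontinuousOn.mono hball).add (hcont.upperSemicontinuous.upperSemicontinuousOn _)
  obtain ⟨y', hy', hmax⟩ := husc.exists_isMaxOn ⟨x₀, hx₀⟩ (isCompact_closedBall x₀ r)
  suffices hy'x₀ : u y' - C * dist y' x₀ ≤ u x₀ by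
    linarith [isMaxOn_iff.1 hmax y hy]
  by_contra! hlt
  have hy'r : dist y' x₀ < r :=
    lt_of_mul_lt_mul_left (by linarith [hM y' hy']) hC
  have hy'x₀ : y' ≠ x₀ := by rintro rfl; simp at hlt
  have hnhds : closedBall x₀ r ∈ nhds y' :=
    Filter.mem_of_superset (isOpen_ball.mem_nhds hy'r) ball_subset_closedBall
  have hlocal : IsLocalMaxOn (fun z => u z - C * dist z x₀) Ω y' := (hmax.isLocalMax hnhds).on Ω
  obtain ⟨p, hp, hHp⟩ := hu.exists_norm_eq_of_isLocalMaxOn_sub_cone (hball hy') hy'x₀ hC hlocal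
  linarith [hH y' hy' p (hp ▸ hRC)]

end Viscosity

theorem viscositySubsolution_locally_lipschitz_general {n : ℕ}
    (Ω : Set (EuclideanSpace ℝ (Fin n))) (hΩ : IsOpen Ω)
    (H : EuclideanSpace ℝ (Fin n) → EuclideanSpace ℝ (Fin n) → ℝ)
    (hcoer : ∀ K : Set (EuclideanSpace ℝ (Fin n)), K ⊆ Ω → IsCompact K →
      ∀ C : ℝ, ∃ R : ℝ, ∀ x ∈ K, ∀ p : EuclideanSpace ℝ (Fin n), R ≤ ‖p‖ → C < H x p)
    (u : EuclideanSpace ℝ (Fin n) → ℝ)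
    (husc : UpperSemicontinuousOn u Ω)
    (hsub : ∀ x ∈ Ω, ∀ φ : EuclideanSpace ℝ (Fin n) → ℝ, ContDiff ℝ 1 φ →
      IsLocalMaxOn (fun y => u y - φ y) Ω x → H x (gradient φ x) ≤ 0) :
    ∀ K : Set (EuclideanSpace ℝ (Fin n)), K ⊆ Ω → IsCompact K →
      ∃ C : ℝ, ∀ x ∈ K, ∀ y ∈ K, segment ℝ x y ⊆ Ω → |u x - u y| ≤ C * ‖x - y‖ := by
  intro K hKΩ hK
  have hu : IsViscositySubsolution H u Ω := ⟨husc, hsub⟩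
  obtain ⟨δ, hδ, hTΩ⟩ := hK.exists_cthickening_subset_open hΩ hKΩ
  have hT : IsCompact (cthickening δ K) := hK.cthickening
  obtain ⟨M, hM⟩ := (husc.mono hTΩ).bddAbove_of_isCompact hT
  replace hM : ∀ z ∈ cthickening δ K, u z ≤ M := fun z hz => hM (mem_image_of_mem u hz)
  obtain ⟨R, hR⟩ := hcoer _ hTΩ hT 0
  have hball : ∀ x ∈ K, closedBall x (δ / 2) ⊆ cthickening δ K := fun x hx =>
    (closedBall_subset_closedBall (by linarith)).trans (closedBall_subset_cthickening hx δ)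
  obtain ⟨L, hL⟩ := exists_abs_sub_le_mul_dist_of_cone_bound hK (half_pos hδ) (le_max_right R 0)
    (fun x hx => hM x (self_subset_cthickening K hx))
    fun x hx C hRC hMC y _ hyx => hu.le_add_mul_dist ((hball x hx).trans hTΩ)
      (fun z hz => hR z (hball x hx hz))
      (fun z hz => hM z (hball x hx hz)) ((le_max_left R 0).trans hRC)
      ((le_max_right R 0).trans hRC) hMC y hyx
  exact ⟨L, fun x hx y hy _ => dist_eq_norm x y ▸ hL x hx y hy⟩

/-- Coercive Hamiltonians force viscosity subsolutions of `H(x, Du) = 0` to be locally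
Lipschitz continuous. -/
theorem viscositySubsolution_locally_lipschitz {n : ℕ}
    (Ω : Set (EuclideanSpace ℝ (Fin n))) (hΩ : IsOpen Ω)
    (H : EuclideanSpace ℝ (Fin n) → EuclideanSpace ℝ (Fin n) → ℝ)
    (hHcont : ContinuousOn (fun q : EuclideanSpace ℝ (Fin n) × EuclideanSpace ℝ (Fin n) =>
      H q.1 q.2) (Ω ×ˢ univ))
    (hcoer : ∀ K : Set (EuclideanSpace ℝ (Fin n)), K ⊆ Ω → IsCompact K →
      ∀ C : ℝ, ∃ R : ℝ, ∀ x ∈ K, ∀ p : EuclideanSpace ℝ (Fin n), R ≤ ‖p‖ → C < H x p)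
    (u : EuclideanSpace ℝ (Fin n) → ℝ)
    (husc : UpperSemicontinuousOn u Ω)
    (hsub : ∀ x ∈ Ω, ∀ φ : EuclideanSpace ℝ (Fin n) → ℝ, ContDiff ℝ 1 φ →
      IsLocalMaxOn (fun y => u y - φ y) Ω x → H x (gradient φ x) ≤ 0) :
    ∀ K : Set (EuclideanSpace ℝ (Fin n)), K ⊆ Ω → IsCompact K →
      ∃ C : ℝ, ∀ x ∈ K, ∀ y ∈ K, segment ℝ x y ⊆ Ω → |u x - u y| ≤ C * ‖x - y‖ :=
  viscositySubsolution_locally_lipschitz_general Ω hΩ H hcoer u husc hsub
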